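/- arXiv:2401.03278 — 3 statements merged into one kernel-verified Lean document; each statement's English description precedes it below -/
import Mathlib

section
/- Let $k \geq 2$ and let $q_k = p_1 p_2 \cdots p_k$ be the product of the first $k$ primes. If $n$ is a positive integer such that $t(n+j) = t(q_k + j)$ for all $0 \leq j \leq q_k - 1$, then $n = q_k$. In particular, the observable $O(q_k, q_k+1, \ldots, 2q_k - 1)$ occurs exactly once. -/
/-!
Write `n = q + d` with `q = q_k`. Comparing `t(n)` with `t(q)` gives `ω(n) = k`, so `n ≥ q`,
and the hypothesis says `t(m + d) = t(m)` for all `m ∈ [q, 2q)`. A Bertrand prime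
`P ∈ (q, 2q)` makes `P + d` prime, so `d` is even; the power `2^t ∈ [q, 2q)` makes `2^t + d`
an even prime power, so `d = 2^t (2^x - 1)`. For an odd prime `c` with `2^a c ∈ [q, 2q)`, the
shape of `t(2^a c)` forces `c + d / 2^a` to be prime. As `2^x - 1 ≢ 2 (mod 3)`, one of
`c = 3, 5, 7` makes this number a multiple of `3` larger than `3` unless `d = 0`.
-/

/-- Planar rooted trees: a tree is a root with an ordered list of subtrees. -/
inductive PTree : Type
  | node : List PTree → PTree

private lemma factorization_lt {n p : ℕ} (hp : p ∈ n.primeFactors) :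
    n.factorization p < n := by
  obtain ⟨hprime, hdvd, hn⟩ := Nat.mem_primeFactors.mp hp
  calc n.factorization p < 2 ^ n.factorization p := Nat.lt_two_pow_self
    _ ≤ p ^ n.factorization p := Nat.pow_le_pow_left hprime.two_le _
    _ ≤ n := Nat.le_of_dvd (Nat.pos_of_ne_zero hn) (Nat.ordProj_dvd n p)

/-- The planar rooted tree `t(n)` of the prime tower factorization of `n`:
the root has one child for each prime factor `p` of `n` (in increasing order),
the corresponding subtree being the tree of the exponent `ν_p(n)`. -/
def primeTower (n : ℕ) : PTree :=
  PTree.node (((n.primeFactors.sort (· ≤ ·)).attach).map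
    (fun p => primeTower (n.factorization p.1)))
decreasing_by
  exact factorization_lt ((Finset.mem_sort _).mp p.2)

/-- The product of the first `k` primes (the `k`-th primorial). -/
noncomputable def primorialN (k : ℕ) : ℕ := ∏ i ∈ Finset.range k, Nat.nth Nat.Prime i

open Finset

theorem primeTower_def (n : ℕ) : primeTower n =
    PTree.node ((n.primeFactors.sort (· ≤ ·)).map fun p => primeTower (n.factorization p)) := by
  rw [primeTower, List.attach_map_val (f := fun p => primeTower (n.factorization p))]

theorem primeTower_eq_node_nil_iff {n : ℕ} : primeTower n = PTree.node [] ↔ n ≤ 1 := by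
  rw [primeTower_def, PTree.node.injEq, List.map_eq_nil_iff, ← List.length_eq_zero_iff,
    length_sort, card_eq_zero, Nat.primeFactors_eq_empty]
  omega

theorem card_primeFactors_eq_of_primeTower_eq {m n : ℕ} (h : primeTower m = primeTower n) :
    #m.primeFactors = #n.primeFactors := by
  rw [primeTower_def, primeTower_def] at h
  simpa using congrArg List.length (PTree.node.inj h)

theorem primeTower_prime_pow {p e : ℕ} (hp : p.Prime) (he : e ≠ 0) :
    primeTower (p ^ e) = PTree.node [primeTower e] := by
  rw [primeTower_def, Nat.primeFactors_prime_pow he hp, sort_singleton]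
  simp [hp.factorization_pow]

theorem primeTower_prime_pow_mul_prime_pow {p r a b : ℕ} (hp : p.Prime) (hr : r.Prime)
    (hpr : p < r) (ha : a ≠ 0) (hb : b ≠ 0) :
    primeTower (p ^ a * r ^ b) = PTree.node [primeTower a, primeTower b] := by
  have hsort : ({p} ∪ {r} : Finset ℕ).sort (· ≤ ·) = [p, r] := by
    rw [singleton_union, sort_insert (r := (· ≤ ·)) (by simp [hpr.le]) (by simp [hpr.ne]),
      sort_singleton]
  have hpa : p ^ a ≠ 0 := pow_ne_zero a hp.ne_zero
  have hrb : r ^ b ≠ 0 := pow_ne_zero b hr.ne_zero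
  rw [primeTower_def, Nat.primeFactors_mul hpa hrb, Nat.primeFactors_prime_pow ha hp,
    Nat.primeFactors_prime_pow hb hr, hsort, Nat.factorization_mul hpa hrb,
    hp.factorization_pow, hr.factorization_pow]
  simp [hpr.ne, hpr.ne']

theorem isPrimePow_of_primeTower_eq_prime_pow {m p e : ℕ} (hp : p.Prime) (he : e ≠ 0)
    (h : primeTower m = primeTower (p ^ e)) : IsPrimePow m := by
  rw [isPrimePow_iff_card_primeFactors_eq_one, card_primeFactors_eq_of_primeTower_eq h,
    Nat.primeFactors_prime_pow he hp, card_singleton]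

theorem eq_one_of_primeTower_eq_one {e : ℕ} (he : e ≠ 0) (h : primeTower e = primeTower 1) :
    e = 1 := by
  have := primeTower_eq_node_nil_iff.1 (h.trans (primeTower_eq_node_nil_iff.2 le_rfl))
  omega

theorem prime_of_primeTower_eq_prime {m p : ℕ} (hp : p.Prime)
    (h : primeTower m = primeTower p) : m.Prime := by
  rw [← pow_one p] at h
  obtain ⟨r, f, hr, hf, rfl⟩ :=
    (isPrimePow_nat_iff m).1 (isPrimePow_of_primeTower_eq_prime_pow hp one_ne_zero h)
  rw [primeTower_prime_pow hr hf.ne', primeTower_prime_pow hp one_ne_zero, PTree.node.injEq,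
    List.cons.injEq] at h
  rwa [eq_one_of_primeTower_eq_one hf.ne' h.1, pow_one]

theorem card_primeFactors_two_pow_mul {a V : ℕ} (ha : a ≠ 0) (hV : Odd V) :
    #(2 ^ a * V).primeFactors = #V.primeFactors + 1 := by
  rw [Nat.Coprime.primeFactors_mul ((Nat.coprime_two_left.2 hV).pow_left a),
    card_union_of_disjoint ((Nat.coprime_two_left.2 hV).pow_left a).disjoint_primeFactors,
    Nat.primeFactors_prime_pow ha Nat.prime_two, card_singleton, add_comm]

theorem prime_of_primeTower_two_pow_mul_eq {a c V : ℕ} (hc : c.Prime) (hc2 : 2 < c)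
    (ha : a ≠ 0) (hV : Odd V) (h : primeTower (2 ^ a * V) = primeTower (2 ^ a * c)) :
    V.Prime := by
  have hcodd : Odd c := hc.odd_of_ne_two hc2.ne'
  have hcard := card_primeFactors_eq_of_primeTower_eq h
  rw [card_primeFactors_two_pow_mul ha hV, card_primeFactors_two_pow_mul ha hcodd,
    hc.primeFactors, card_singleton, add_left_inj,
    ← isPrimePow_iff_card_primeFactors_eq_one] at hcard
  obtain ⟨v, f, hv, hf, rfl⟩ := (isPrimePow_nat_iff V).1 hcard
  have hv2 : 2 < v := lt_of_le_of_ne hv.two_le fun h2 => by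
    subst h2; exact Nat.not_even_iff_odd.2 hV ((Nat.even_pow' hf.ne').2 even_two)
  rw [← pow_one c, primeTower_prime_pow_mul_prime_pow Nat.prime_two hv hv2 ha hf.ne',
    primeTower_prime_pow_mul_prime_pow Nat.prime_two hc hc2 ha one_ne_zero, PTree.node.injEq,
    List.cons.injEq, List.cons.injEq] at h
  rwa [eq_one_of_primeTower_eq_one hf.ne' h.2.1, pow_one]

theorem primorialN_eq_prod_image (k : ℕ) :
    primorialN k = ∏ p ∈ (range k).image (Nat.nth Nat.Prime), p :=
  (prod_image (f := id) fun _ _ _ _ h => Nat.nth_injective Nat.infinite_setOfPred_prime h).symm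

theorem card_primeFactors_primorialN (k : ℕ) : #(primorialN k).primeFactors = k := by
  rw [primorialN_eq_prod_image, Nat.primeFactors_prod (by simp [Nat.prime_nth_prime]),
    card_image_of_injective _ (Nat.nth_injective Nat.infinite_setOfPred_prime), card_range]

theorem primorialN_card_le_prod {S : Finset ℕ} (hS : ∀ p ∈ S, p.Prime) :
    primorialN #S ≤ ∏ p ∈ S, p := by
  induction S using Finset.induction_on_max with
  | empty => simp [primorialN]
  | insert M S hlt ih =>
    have hM : Nat.nth Nat.Prime #S ≤ M := by
      have hcount : #S ≤ Nat.count Nat.Prime M := by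
        rw [Nat.count_eq_card_filter_range]
        exact card_le_card fun p hp => by simp [hlt p hp, hS p (mem_insert_of_mem hp)]
      calc Nat.nth Nat.Prime #S ≤ Nat.nth Nat.Prime (Nat.count Nat.Prime M) :=
            (Nat.nth_le_nth Nat.infinite_setOfPred_prime).2 hcount
        _ = M := Nat.nth_count (hS M (mem_insert_self M S))
    have hMS : M ∉ S := fun h => (hlt M h).false
    rw [card_insert_of_notMem hMS, prod_insert hMS, primorialN, prod_range_succ, ← primorialN,
      mul_comm]
    exact Nat.mul_le_mul hM (ih fun p hp => hS p (mem_insert_of_mem hp))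

theorem primorialN_card_primeFactors_le {n : ℕ} (hn : n ≠ 0) :
    primorialN #n.primeFactors ≤ n :=
  (primorialN_card_le_prod fun _ => Nat.prime_of_mem_primeFactors).trans
    (Nat.le_of_dvd (Nat.pos_of_ne_zero hn) (Nat.prod_primeFactors_dvd n))

theorem six_le_primorialN {k : ℕ} (hk : 2 ≤ k) : 6 ≤ primorialN k :=
  calc 6 = primorialN 2 := by
        simp [primorialN, prod_range_succ, Nat.nth_prime_zero_eq_two, Nat.nth_prime_one_eq_three]
    _ ≤ primorialN k := prod_le_prod_of_subset_of_one_le' (range_subset_range.2 hk)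
        fun i _ _ => (Nat.prime_nth_prime i).one_lt.le

theorem exists_two_pow_mul_mem_Ico {c q : ℕ} (hc : 0 < c) (hcq : c < q) :
    ∃ a ≠ 0, q ≤ 2 ^ a * c ∧ 2 ^ a * c < 2 * q := by
  have hex : ∃ a, q ≤ 2 ^ a * c :=
    ⟨q, Nat.lt_two_pow_self.le.trans (Nat.le_mul_of_pos_right _ hc)⟩
  obtain ⟨a, ha⟩ : ∃ a, Nat.find hex = a + 1 := Nat.exists_eq_succ_of_ne_zero fun h0 => by
    have := Nat.find_spec hex
    rw [h0, pow_zero, one_mul] at this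
    omega
  have hmin : ¬ q ≤ 2 ^ a * c := Nat.find_min hex (by omega)
  refine ⟨a + 1, a.succ_ne_zero, ha ▸ Nat.find_spec hex, ?_⟩
  rw [pow_succ, mul_right_comm]
  omega

theorem exists_prime_two_pow_mul_mem_Ico_three_dvd {q t y : ℕ} (hq : 5 < q) (htlo : q ≤ 2 ^ t)
    (hthi : 2 ^ t < 2 * q) (hy : y % 3 ≠ 2) :
    ∃ c a g, c.Prime ∧ 2 < c ∧ a ≠ 0 ∧ g ≠ 0 ∧ a + g = t ∧
      q ≤ 2 ^ a * c ∧ 2 ^ a * c < 2 * q ∧ 3 ∣ c + 2 ^ g * y := by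
  rcases (by omega : y % 3 = 0 ∨ y % 3 = 1) with hy0 | hy1
  · obtain ⟨a, ha, hlo, hhi⟩ :=
      exists_two_pow_mul_mem_Ico (c := 3) (q := q) (by norm_num) (by omega)
    have hat : a < t := (Nat.pow_lt_pow_iff_right one_lt_two).1 (by omega)
    refine ⟨3, a, t - a, Nat.prime_three, by norm_num, ha, by omega, by omega, hlo, hhi, ?_⟩
    exact dvd_add dvd_rfl (dvd_mul_of_dvd_right (Nat.dvd_of_mod_eq_zero hy0) _)
  · obtain ⟨a, ha, hlo, hhi⟩ := exists_two_pow_mul_mem_Ico (c := 5) (by norm_num) hq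
    have hlow : 2 ^ (a + 1) < 2 ^ t := by rw [pow_succ]; omega
    have hhigh : 2 ^ t < 2 ^ (a + 4) := by rw [pow_add]; omega
    rw [Nat.pow_lt_pow_iff_right one_lt_two] at hlow hhigh
    obtain rfl | rfl : t = a + 2 ∨ t = a + 3 := by omega
    · exact ⟨5, a, 2, by norm_num, by norm_num, ha, two_ne_zero, rfl, hlo, hhi, by omega⟩
    · rw [pow_add] at htlo hthi
      exact ⟨7, a, 3, by norm_num, by norm_num, ha, three_ne_zero, rfl, by omega, by omega,
        by omega⟩

def IsTowerShift (q d : ℕ) : Prop :=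
  ∀ m ∈ Set.Ico q (2 * q), primeTower (m + d) = primeTower m

namespace IsTowerShift

variable {q d : ℕ}

theorem even (hwin : IsTowerShift q d) (hq : 2 ≤ q) : Even d := by
  obtain ⟨P, hP, hqP, hP2q⟩ := Nat.exists_prime_lt_and_le_two_mul q (by omega)
  have hPodd : Odd P := hP.odd_of_ne_two (by omega)
  have hP2q' : P < 2 * q := lt_of_le_of_ne hP2q fun h =>
    Nat.not_even_iff_odd.2 hPodd (h ▸ even_two_mul q)
  have hPd : (P + d).Prime := prime_of_primeTower_eq_prime hP (hwin P ⟨hqP.le, hP2q'⟩)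
  exact (Nat.odd_add.1 (hPd.odd_of_ne_two (by omega))).1 hPodd

theorem exists_eq_two_pow_mul (hwin : IsTowerShift q d) (hd : Even d) {t : ℕ} (ht0 : t ≠ 0)
    (htlo : q ≤ 2 ^ t) (hthi : 2 ^ t < 2 * q) : ∃ x, d = 2 ^ t * (2 ^ x - 1) := by
  obtain ⟨r, e, hr, -, hre⟩ := (isPrimePow_nat_iff _).1
    (isPrimePow_of_primeTower_eq_prime_pow Nat.prime_two ht0 (hwin (2 ^ t) ⟨htlo, hthi⟩))
  have heven : Even (2 ^ t + d) := (Nat.even_pow.2 ⟨even_two, ht0⟩).add hd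
  obtain rfl : r = 2 := ((Nat.prime_dvd_prime_iff_eq Nat.prime_two hr).1
    (Nat.prime_two.dvd_of_dvd_pow (hre ▸ heven.two_dvd))).symm
  have hte : t ≤ e := (Nat.pow_le_pow_iff_right one_lt_two).1 (by omega)
  refine ⟨e - t, ?_⟩
  rw [Nat.mul_sub, mul_one, ← pow_add, Nat.add_sub_cancel' hte]
  omega

theorem prime_add (hwin : IsTowerShift q d) {a c e : ℕ} (hc : c.Prime) (hc2 : 2 < c)
    (ha : a ≠ 0) (hlo : q ≤ 2 ^ a * c) (hhi : 2 ^ a * c < 2 * q) (hd : d = 2 ^ a * e)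
    (he : Even e) : (c + e).Prime :=
  prime_of_primeTower_two_pow_mul_eq hc hc2 ha ((hc.odd_of_ne_two hc2.ne').add_even he)
    (by rw [mul_add, ← hd]; exact hwin _ ⟨hlo, hhi⟩)

theorem eq_zero (hwin : IsTowerShift q d) (hq : 5 < q) : d = 0 := by
  obtain ⟨t, ht0, htlo, hthi⟩ := exists_two_pow_mul_mem_Ico one_pos (by omega : 1 < q)
  rw [mul_one] at htlo hthi
  obtain ⟨x, rfl⟩ := hwin.exists_eq_two_pow_mul (hwin.even (by omega)) ht0 htlo hthi
  have hy : (2 ^ x - 1) % 3 ≠ 2 := by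
    have h3 : ¬ 3 ∣ 2 ^ x := fun h3 => by
      have := Nat.prime_three.dvd_of_dvd_pow h3
      omega
    have := Nat.one_le_two_pow (n := x)
    omega
  obtain ⟨c, a, g, hc, hc2, ha, hg, rfl, hlo, hhi, h3⟩ :=
    exists_prime_two_pow_mul_mem_Ico_three_dvd hq htlo hthi hy
  have hP := hwin.prime_add hc hc2 ha hlo hhi (by rw [pow_add, mul_assoc])
    ((Nat.even_pow.2 ⟨even_two, hg⟩).mul_right (2 ^ x - 1))
  have hzero : 2 ^ g * (2 ^ x - 1) = 0 := by
    have := (Nat.prime_dvd_prime_iff_eq Nat.prime_three hP).1 h3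
    omega
  rw [mul_eq_zero] at hzero ⊢
  exact Or.inr (hzero.resolve_left (by positivity))

end IsTowerShift

theorem stmt_3_general (k : ℕ) (hk : 2 ≤ k) (n : ℕ)
    (h : ∀ j : ℕ, j ≤ primorialN k - 1 →
      primeTower (n + j) = primeTower (primorialN k + j)) :
    n = primorialN k := by
  have hcard : #n.primeFactors = k := by
    simpa [card_primeFactors_primorialN] using
      card_primeFactors_eq_of_primeTower_eq (h 0 (Nat.zero_le _))
  set q := primorialN k
  have hq : 6 ≤ q := six_le_primorialN hk
  have hn : n ≠ 0 := by
    rintro rfl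
    simp at hcard
    omega
  have hqn : q ≤ n := by simpa [hcard] using primorialN_card_primeFactors_le hn
  have hwin : IsTowerShift q (n - q) := fun m ⟨hlo, hhi⟩ => by
    have := h (m - q) (by omega)
    rwa [show n + (m - q) = m + (n - q) by omega, show q + (m - q) = m by omega] at this
  have := hwin.eq_zero (by omega)
  omega

/-- If the pattern of trees `(t(q_k), …, t(2q_k - 1))` occurs starting at a positive
integer `n`, then `n = q_k`: the observable `O(q_k, …, 2q_k - 1)` occurs only once. -/
theorem stmt_3 (k : ℕ) (hk : 2 ≤ k) (n : ℕ) (hn : 1 ≤ n)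
    (h : ∀ j : ℕ, j ≤ primorialN k - 1 →
      primeTower (n + j) = primeTower (primorialN k + j)) :
    n = primorialN k :=
  stmt_3_general k hk n h
end

section
/- There is an absolute constant $C$ such that $\sum_{n \leq x} 2^{E(n)} \leq C\, x \log x$ for all $x \geq 2$. -/
/-- `towerE n` is the number of edges of the prime-tower tree of `n`:
`E(1) = 0`, `E` is additive on coprime factorizations, and `E(p^ν) = E(ν) + 1`. -/
def towerE (n : ℕ) : ℕ :=
  ∑ p ∈ n.primeFactors.attach, (towerE (n.factorization p.1) + 1)
decreasing_by
  exact factorization_lt p.2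

/-!
Splitting off the primes that divide `n` exactly once writes `n = m * s` with `m` powerful and
`2 ^ E(n) = 2 ^ E(m) * d(s)`. Hence `2 ^ E ≤ w * d` as arithmetic functions, where `w` is `2 ^ E`
restricted to powerful numbers, and summing `d` over `s ≤ x / m` gives
`∑_{n ≤ x} 2 ^ E(n) ≤ x (1 + log x) ∑_{m ≤ x} w(m) / m`. The last sum stays bounded:
`2 ^ E(p ^ k) ≤ 2k` gives `2 ^ E(m) ≪ m ^ (1/3)`, and a powerful `m` is `a ^ 2 * b ^ 3`, so
`w(m) / m ≪ a ^ (-4/3) * b ^ (-2)`, which is summable over pairs `(a, b)`.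
-/

open Finset ArithmeticFunction
open scoped ArithmeticFunction.sigma

lemma towerE_eq_sum (n : ℕ) :
    towerE n = ∑ p ∈ n.primeFactors, (towerE (n.factorization p) + 1) := by
  rw [towerE]
  exact sum_attach n.primeFactors fun p => towerE (n.factorization p) + 1

lemma towerE_prime_pow {p k : ℕ} (hp : p.Prime) (hk : k ≠ 0) :
    towerE (p ^ k) = towerE k + 1 := by
  rw [towerE_eq_sum, Nat.primeFactors_prime_pow hk hp, hp.factorization_pow]
  simp

lemma towerE_mul {m n : ℕ} (h : m.Coprime n) : towerE (m * n) = towerE m + towerE n := by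
  rw [towerE_eq_sum, h.primeFactors_mul, sum_union h.disjoint_primeFactors,
    Nat.factorization_mul_of_coprime h, towerE_eq_sum m, towerE_eq_sum n]
  congr 1 <;> refine sum_congr rfl fun p hp => ?_
  · have : p ∉ n.primeFactors := disjoint_left.1 h.disjoint_primeFactors hp
    simp [Finsupp.notMem_support_iff.1 (by rwa [Nat.support_factorization])]
  · have : p ∉ m.primeFactors := disjoint_right.1 h.disjoint_primeFactors hp
    simp [Finsupp.notMem_support_iff.1 (by rwa [Nat.support_factorization])]

lemma two_pow_towerE_eq_prod (n : ℕ) :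
    2 ^ towerE n = ∏ p ∈ n.primeFactors, 2 ^ (towerE (n.factorization p) + 1) := by
  rw [towerE_eq_sum, prod_pow_eq_pow_sum]

lemma two_mul_le_two_pow (k : ℕ) : 2 * k ≤ 2 ^ k := by
  induction k with
  | zero => norm_num
  | succ k ih =>
    rw [pow_succ]
    have : 1 ≤ 2 ^ k := Nat.one_le_two_pow
    omega

lemma two_pow_towerE_le {n : ℕ} (hn : n ≠ 0) : 2 ^ towerE n ≤ n := by
  induction n using Nat.strong_induction_on with
  | _ n ih =>
  calc 2 ^ towerE n = ∏ p ∈ n.primeFactors, 2 ^ (towerE (n.factorization p) + 1) :=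
        two_pow_towerE_eq_prod n
    _ ≤ ∏ p ∈ n.primeFactors, p ^ n.factorization p := by
        refine prod_le_prod' fun p hp => ?_
        have hk : n.factorization p ≠ 0 := Finsupp.mem_support_iff.1 (by simpa using hp)
        calc 2 ^ (towerE (n.factorization p) + 1)
            = 2 * 2 ^ towerE (n.factorization p) := by ring
          _ ≤ 2 * n.factorization p := by gcongr; exact ih _ (factorization_lt hp) hk
          _ ≤ 2 ^ n.factorization p := two_mul_le_two_pow _
          _ ≤ p ^ n.factorization p := by gcongr; exact (Nat.prime_of_mem_primeFactors hp).two_le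
    _ = n := Nat.prod_factorization_pow_eq_self hn

lemma cube_le_two_pow_add_two (k : ℕ) : k ^ 3 ≤ 2 ^ (k + 2) := by
  induction k with
  | zero => norm_num
  | succ k ih =>
    rcases Nat.lt_or_ge k 4 with hk | hk
    · interval_cases k <;> norm_num
    · calc (k + 1) ^ 3 ≤ 2 * k ^ 3 := by
            nlinarith [Nat.mul_le_mul_right (k ^ 2) hk, Nat.mul_le_mul_right k hk]
        _ ≤ 2 * 2 ^ (k + 2) := by omega
        _ = 2 ^ (k + 1 + 2) := by ring

-- `(2k)^3 ≤ 8^k ≤ p^k` once `p ≥ 8`, so only the primes below `8` cost a constant factor.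
lemma two_mul_pow_three_le {p : ℕ} (hp : p.Prime) (k : ℕ) :
    (2 * k) ^ 3 ≤ (if p < 8 then 2 ^ 5 else 1) * p ^ k := by
  split_ifs with hp8
  · calc (2 * k) ^ 3 = 8 * k ^ 3 := by ring
      _ ≤ 8 * 2 ^ (k + 2) := Nat.mul_le_mul_left 8 (cube_le_two_pow_add_two k)
      _ = 2 ^ 5 * 2 ^ k := by ring
      _ ≤ 2 ^ 5 * p ^ k := by gcongr; exact hp.two_le
  · calc (2 * k) ^ 3 ≤ (2 ^ k) ^ 3 := by gcongr; exact two_mul_le_two_pow k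
      _ = 8 ^ k := by rw [← pow_mul, mul_comm, pow_mul]; norm_num
      _ ≤ 1 * p ^ k := by rw [one_mul]; gcongr; omega

lemma prod_ite_lt_eight_le (s : Finset ℕ) :
    ∏ p ∈ s, (if p < 8 then 2 ^ 5 else 1) ≤ 2 ^ 40 := by
  rw [← prod_filter, prod_const]
  calc (2 ^ 5) ^ #{p ∈ s | p < 8} ≤ (2 ^ 5) ^ #(range 8) := by
        gcongr
        · norm_num
        · intro p hp
          simp only [mem_filter, mem_range] at hp ⊢
          exact hp.2
    _ = 2 ^ 40 := by norm_num

lemma two_pow_towerE_pow_three_le {m : ℕ} (hm : m ≠ 0) : (2 ^ towerE m) ^ 3 ≤ 2 ^ 40 * m := by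
  calc (2 ^ towerE m) ^ 3
      = ∏ p ∈ m.primeFactors, (2 ^ (towerE (m.factorization p) + 1)) ^ 3 := by
        rw [two_pow_towerE_eq_prod, prod_pow]
    _ ≤ ∏ p ∈ m.primeFactors, (2 * m.factorization p) ^ 3 := by
        refine prod_le_prod' fun p hp => ?_
        have hk : m.factorization p ≠ 0 := Finsupp.mem_support_iff.1 (by simpa using hp)
        gcongr
        rw [pow_succ']
        gcongr
        exact two_pow_towerE_le hk
    _ ≤ ∏ p ∈ m.primeFactors, (if p < 8 then 2 ^ 5 else 1) * p ^ m.factorization p :=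
        prod_le_prod' fun p hp => two_mul_pow_three_le (Nat.prime_of_mem_primeFactors hp) _
    _ ≤ 2 ^ 40 * m := by
        rw [prod_mul_distrib, ← Nat.prod_primeFactors_pow_factorization hm]
        gcongr
        exact prod_ite_lt_eight_le _

def Nat.Powerful (n : ℕ) : Prop := n ≠ 0 ∧ ∀ p : ℕ, p.Prime → p ∣ n → p ^ 2 ∣ n

namespace Nat.Powerful

variable {m n p k : ℕ}

lemma one : (1 : ℕ).Powerful :=
  ⟨one_ne_zero, fun _ hp h => absurd (Nat.eq_one_of_dvd_one h) hp.ne_one⟩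

lemma mul (hm : m.Powerful) (hn : n.Powerful) : (m * n).Powerful := by
  refine ⟨mul_ne_zero hm.1 hn.1, fun p hp h => ?_⟩
  rcases hp.dvd_mul.1 h with h | h
  · exact (hm.2 p hp h).mul_right n
  · exact (hn.2 p hp h).mul_left m

lemma of_mul_left (h : (m * n).Powerful) (hmn : m.Coprime n) : m.Powerful := by
  refine ⟨left_ne_zero_of_mul h.1, fun p hp hpm => ?_⟩
  have hpn : ¬ p ∣ n := fun hpn => hp.not_dvd_one (hmn.gcd_eq_one ▸ Nat.dvd_gcd hpm hpn)
  exact (((Nat.Prime.coprime_iff_not_dvd hp).2 hpn).pow_left 2).dvd_of_dvd_mul_right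
    (h.2 p hp (hpm.mul_right n))

lemma of_mul_right (h : (m * n).Powerful) (hmn : m.Coprime n) : n.Powerful :=
  of_mul_left (mul_comm m n ▸ h) hmn.symm

lemma prime_pow (hp : p.Prime) (hk : 2 ≤ k) : (p ^ k).Powerful :=
  ⟨pow_ne_zero _ hp.ne_zero, fun q hq h => by
    rw [(Nat.prime_dvd_prime_iff_eq hq hp).1 (hq.dvd_of_dvd_pow h)]
    exact pow_dvd_pow p hk⟩

lemma two_le_of_prime_pow (h : (p ^ k).Powerful) (hp : p.Prime) (hk : k ≠ 0) : 2 ≤ k :=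
  (Nat.pow_dvd_pow_iff_le_right hp.one_lt).1 (h.2 p hp (dvd_pow_self p hk))

lemma exists_sq_mul_cube (h : n.Powerful) : ∃ a b, a ^ 2 * b ^ 3 = n := by
  induction n using Nat.recOnPosPrimePosCoprime with
  | zero => exact absurd rfl h.1
  | one => exact ⟨1, 1, rfl⟩
  | prime_pow p k hp hk =>
    obtain ⟨j, rfl | rfl⟩ := Nat.even_or_odd' k
    · exact ⟨p ^ j, 1, by ring⟩
    · obtain ⟨i, rfl⟩ : ∃ i, j = i + 1 := by
        have := h.two_le_of_prime_pow hp hk.ne'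
        exact ⟨j - 1, by omega⟩
      exact ⟨p ^ i, p, by ring⟩
  | coprime a b _ _ hab iha ihb =>
    obtain ⟨a₁, b₁, rfl⟩ := iha (h.of_mul_left hab)
    obtain ⟨a₂, b₂, rfl⟩ := ihb (h.of_mul_right hab)
    exact ⟨a₁ * a₂, b₁ * b₂, by ring⟩

end Nat.Powerful

lemma exists_powerful_mul_eq {n : ℕ} (hn : n ≠ 0) :
    ∃ m s, m * s = n ∧ m.Powerful ∧ 2 ^ towerE n = 2 ^ towerE m * σ 0 s := by
  induction n using Nat.recOnPosPrimePosCoprime with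
  | zero => exact absurd rfl hn
  | one => exact ⟨1, 1, one_mul 1, Nat.Powerful.one, by simp⟩
  | prime_pow p k hp hk =>
    rcases (Nat.one_le_of_lt hk).eq_or_lt' with rfl | hk2
    · refine ⟨1, p ^ 1, one_mul _, Nat.Powerful.one, ?_⟩
      rw [sigma_zero_apply_prime_pow hp, towerE_prime_pow hp one_ne_zero]
      ring
    · exact ⟨p ^ k, 1, mul_one _, Nat.Powerful.prime_pow hp hk2, by simp⟩
  | coprime a b ha hb hab iha ihb =>
    obtain ⟨m₁, s₁, rfl, hm₁, e₁⟩ := iha (by omega)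
    obtain ⟨m₂, s₂, rfl, hm₂, e₂⟩ := ihb (by omega)
    have hm : m₁.Coprime m₂ :=
      (hab.coprime_dvd_left (dvd_mul_right m₁ s₁)).coprime_dvd_right (dvd_mul_right m₂ s₂)
    have hs : s₁.Coprime s₂ :=
      (hab.coprime_dvd_left (dvd_mul_left s₁ m₁)).coprime_dvd_right (dvd_mul_left s₂ m₂)
    refine ⟨m₁ * m₂, s₁ * s₂, by ring, hm₁.mul hm₂, ?_⟩
    rw [towerE_mul hab, pow_add, e₁, e₂, towerE_mul hm, pow_add,
      isMultiplicative_sigma.map_mul_of_coprime hs]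
    ring

open scoped Classical in
noncomputable def powerfulTowerWeight : ArithmeticFunction ℝ :=
  ⟨fun m => if m.Powerful then 2 ^ towerE m else 0, by simp [Nat.Powerful]⟩

open scoped Classical in
lemma powerfulTowerWeight_apply (m : ℕ) :
    powerfulTowerWeight m = if m.Powerful then 2 ^ towerE m else 0 := rfl

lemma powerfulTowerWeight_nonneg (m : ℕ) : 0 ≤ powerfulTowerWeight m := by
  rw [powerfulTowerWeight_apply]
  split_ifs <;> positivity

lemma powerfulTowerWeight_le (m : ℕ) : powerfulTowerWeight m ≤ 2 ^ towerE m := by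
  rw [powerfulTowerWeight_apply]
  split_ifs
  exacts [le_rfl, by positivity]

lemma two_pow_towerE_le_powerfulTowerWeight_mul_sigma {n : ℕ} (hn : n ≠ 0) :
    (2 : ℝ) ^ towerE n ≤ (powerfulTowerWeight * σ 0) n := by
  obtain ⟨m, s, hms, hm, e⟩ := exists_powerful_mul_eq hn
  rw [mul_apply]
  refine le_trans ?_ (single_le_sum (fun x _ => ?_)
    (show (m, s) ∈ n.divisorsAntidiagonal from Nat.mem_divisorsAntidiagonal.2 ⟨hms, hn⟩))
  · rw [powerfulTowerWeight_apply, if_pos hm, natCoe_apply]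
    exact_mod_cast e.le
  · exact mul_nonneg (powerfulTowerWeight_nonneg _) (by simp)

lemma sum_Ioc_sigma_zero_le (N : ℕ) :
    ∑ n ∈ Ioc 0 N, (σ 0 n : ℝ) ≤ N * (1 + Real.log N) := by
  rw [← Nat.cast_sum, sum_Ioc_sigma0_eq_sum_div, Nat.cast_sum]
  calc ∑ a ∈ Ioc 0 N, ((N / a : ℕ) : ℝ) ≤ ∑ a ∈ Ioc 0 N, (N : ℝ) * (a : ℝ)⁻¹ :=
        sum_le_sum fun a _ => Nat.cast_div_le.trans_eq (div_eq_mul_inv _ _)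
    _ = N * harmonic N := by
        rw [← mul_sum, harmonic_eq_sum_Icc]
        push_cast
        rfl
    _ ≤ N * (1 + Real.log N) := by gcongr; exact harmonic_le_one_add_log N

lemma sum_Ioc_mul_sigma_zero_le {w : ArithmeticFunction ℝ} (hw : ∀ n, 0 ≤ w n) (N : ℕ) :
    ∑ n ∈ Ioc 0 N, (w * σ 0) n ≤ N * (1 + Real.log N) * ∑ m ∈ Ioc 0 N, w m / m := by
  rw [sum_Ioc_mul_eq_sum_sum, mul_sum]
  refine sum_le_sum fun m hm => ?_
  have hm : (0 : ℝ) < m := by simp only [mem_Ioc] at hm; exact_mod_cast hm.1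
  have hlog : Real.log (N / m : ℕ) ≤ Real.log N := by
    rcases Nat.eq_zero_or_pos (N / m) with h | h
    · rw [h, Nat.cast_zero, Real.log_zero]
      exact Real.log_natCast_nonneg N
    · exact Real.log_le_log (by exact_mod_cast h) (by exact_mod_cast Nat.div_le_self N m)
  simp only [natCoe_apply]
  calc w m * ∑ s ∈ Ioc 0 (N / m), (σ 0 s : ℝ)
      ≤ w m * ((N / m : ℕ) * (1 + Real.log (N / m : ℕ))) :=
        mul_le_mul_of_nonneg_left (sum_Ioc_sigma_zero_le _) (hw m)
    _ ≤ w m * ((N / m) * (1 + Real.log N)) := by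
        refine mul_le_mul_of_nonneg_left (mul_le_mul Nat.cast_div_le (by linarith) ?_ ?_) (hw m)
        · linarith [Real.log_natCast_nonneg (N / m)]
        · positivity
    _ = N * (1 + Real.log N) * (w m / m) := by field_simp

lemma two_pow_towerE_div_le {m : ℕ} (hm : m ≠ 0) :
    (2 : ℝ) ^ towerE m / m ≤ 2 ^ 14 * (m : ℝ) ^ (-(2 / 3) : ℝ) := by
  have hm0 : (0 : ℝ) < m := Nat.cast_pos.2 (Nat.pos_of_ne_zero hm)
  have hcube : (2 ^ 14 * (m : ℝ) ^ (1 / 3 : ℝ)) ^ 3 = 2 ^ 42 * m := by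
    rw [mul_pow, ← Real.rpow_natCast ((m : ℝ) ^ (1 / 3 : ℝ)), ← Real.rpow_mul hm0.le]
    norm_num
  rw [div_le_iff₀ hm0, mul_assoc, ← Real.rpow_add_one hm0.ne',
    show -(2 / 3 : ℝ) + 1 = 1 / 3 by norm_num]
  refine le_of_pow_le_pow_left₀ three_ne_zero (by positivity) ?_
  calc ((2 : ℝ) ^ towerE m) ^ 3 ≤ (2 : ℝ) ^ 40 * m := by
        exact_mod_cast two_pow_towerE_pow_three_le hm
    _ ≤ (2 : ℝ) ^ 42 * m := by gcongr <;> norm_num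
    _ = _ := hcube.symm

lemma rpow_sq_mul_cube (a b : ℕ) :
    ((a ^ 2 * b ^ 3 : ℕ) : ℝ) ^ (-(2 / 3) : ℝ)
      = (a : ℝ) ^ (-(4 / 3) : ℝ) * (b : ℝ) ^ (-2 : ℝ) := by
  push_cast
  rw [Real.mul_rpow (by positivity) (by positivity), ← Real.rpow_natCast (a : ℝ) 2,
    ← Real.rpow_natCast (b : ℝ) 3, ← Real.rpow_mul (by positivity),
    ← Real.rpow_mul (by positivity)]
  norm_num

lemma sum_rpow_le_tsum {p : ℝ} (hp : p < -1) (s : Finset ℕ) :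
    ∑ n ∈ s, (n : ℝ) ^ p ≤ ∑' n : ℕ, (n : ℝ) ^ p :=
  (Real.summable_nat_rpow.2 hp).sum_le_tsum s fun n _ => Real.rpow_nonneg n.cast_nonneg p

open scoped Classical in
lemma filter_powerful_subset_image (N : ℕ) :
    {m ∈ Ioc 0 N | m.Powerful} ⊆ (Ioc 0 N ×ˢ Ioc 0 N).image fun q => q.1 ^ 2 * q.2 ^ 3 := by
  intro m hm
  simp only [mem_filter, mem_Ioc] at hm
  obtain ⟨⟨hpos, hle⟩, hpow⟩ := hm
  obtain ⟨a, b, rfl⟩ := hpow.exists_sq_mul_cube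
  have ha : a ≠ 0 := by rintro rfl; simp at hpos
  have hb : b ≠ 0 := by rintro rfl; simp at hpos
  refine mem_image.2 ⟨(a, b), ?_, rfl⟩
  simp only [mem_product, mem_Ioc]
  refine ⟨⟨Nat.pos_of_ne_zero ha, ?_⟩, Nat.pos_of_ne_zero hb, ?_⟩
  · exact (Nat.le_of_dvd hpos ((dvd_pow_self a two_ne_zero).mul_right _)).trans hle
  · exact (Nat.le_of_dvd hpos ((dvd_pow_self b three_ne_zero).mul_left _)).trans hle

open scoped Classical in
lemma sum_Ioc_powerfulTowerWeight_div_le (N : ℕ) :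
    ∑ m ∈ Ioc 0 N, powerfulTowerWeight m / m
      ≤ 2 ^ 14 * ((∑' a : ℕ, (a : ℝ) ^ (-(4 / 3) : ℝ)) *
          ∑' b : ℕ, (b : ℝ) ^ (-2 : ℝ)) := by
  have hnonneg (m : ℕ) : 0 ≤ powerfulTowerWeight m / m :=
    div_nonneg (powerfulTowerWeight_nonneg m) m.cast_nonneg
  calc ∑ m ∈ Ioc 0 N, powerfulTowerWeight m / m
      = ∑ m ∈ Ioc 0 N with m.Powerful, powerfulTowerWeight m / m := by
        refine (sum_filter_of_ne fun m _ h => ?_).symm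
        by_contra hm
        simp [powerfulTowerWeight_apply, hm] at h
    _ ≤ ∑ m ∈ (Ioc 0 N ×ˢ Ioc 0 N).image (fun q => q.1 ^ 2 * q.2 ^ 3),
          powerfulTowerWeight m / m :=
        sum_le_sum_of_subset_of_nonneg (filter_powerful_subset_image N) fun m _ _ => hnonneg m
    _ ≤ ∑ q ∈ Ioc 0 N ×ˢ Ioc 0 N,
          powerfulTowerWeight (q.1 ^ 2 * q.2 ^ 3) / ((q.1 ^ 2 * q.2 ^ 3 : ℕ) : ℝ) :=
        sum_image_le_of_nonneg fun m _ => hnonneg m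
    _ ≤ ∑ q ∈ Ioc 0 N ×ˢ Ioc 0 N,
          2 ^ 14 * ((q.1 : ℝ) ^ (-(4 / 3) : ℝ) * (q.2 : ℝ) ^ (-2 : ℝ)) := by
        refine sum_le_sum fun q hq => ?_
        simp only [mem_product, mem_Ioc] at hq
        have hq0 : q.1 ^ 2 * q.2 ^ 3 ≠ 0 :=
          mul_ne_zero (pow_ne_zero _ (by omega)) (pow_ne_zero _ (by omega))
        rw [← rpow_sq_mul_cube]
        exact (div_le_div_of_nonneg_right (powerfulTowerWeight_le _) (Nat.cast_nonneg _)).trans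
          (two_pow_towerE_div_le hq0)
    _ = 2 ^ 14 * ((∑ a ∈ Ioc 0 N, (a : ℝ) ^ (-(4 / 3) : ℝ)) *
          ∑ b ∈ Ioc 0 N, (b : ℝ) ^ (-2 : ℝ)) := by
        rw [← mul_sum, sum_product, sum_mul_sum]
    _ ≤ _ := by
        gcongr <;> exact sum_rpow_le_tsum (by norm_num) _

/-- `∑_{n ≤ x} 2^{E(n)} ≤ C x log x` for an absolute constant `C`. -/
theorem stmt_6 : ∃ C : ℝ, ∀ x : ℕ, 2 ≤ x →
    ∑ n ∈ Finset.Icc 1 x, (2 : ℝ) ^ towerE n ≤ C * x * Real.log x := by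
  set K := 2 ^ 14 * ((∑' a : ℕ, (a : ℝ) ^ (-(4 / 3) : ℝ)) *
    ∑' b : ℕ, (b : ℝ) ^ (-2 : ℝ))
  refine ⟨3 * K, fun x hx => ?_⟩
  have hlog : 1 + Real.log x ≤ 3 * Real.log x := by
    have : Real.log 2 ≤ Real.log x := Real.log_le_log two_pos (by exact_mod_cast hx)
    linarith [Real.log_two_gt_d9]
  calc ∑ n ∈ Icc 1 x, (2 : ℝ) ^ towerE n
      ≤ ∑ n ∈ Ioc 0 x, (powerfulTowerWeight * σ 0) n :=
        sum_le_sum fun n hn => two_pow_towerE_le_powerfulTowerWeight_mul_sigma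
          (by simp only [mem_Icc] at hn; omega)
    _ ≤ x * (1 + Real.log x) * ∑ m ∈ Ioc 0 x, powerfulTowerWeight m / m :=
        sum_Ioc_mul_sigma_zero_le powerfulTowerWeight_nonneg x
    _ ≤ x * (3 * Real.log x) * K := by
        gcongr
        · exact sum_nonneg fun m _ => div_nonneg (powerfulTowerWeight_nonneg m) m.cast_nonneg
        · exact sum_Ioc_powerfulTowerWeight_div_le x
    _ = 3 * K * x * Real.log x := by ring
end

section
/- There is an absolute constant $C$ such that for all $x \geq 2$ and $g \geq 2$, the number of $n \leq x$ such that $t^\#(n+1) = t^\#(n+2) = \cdots = t^\#(n+g)$ is at most $C x / \log g$. -/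
/-- `canon n` is a canonical representative of the nonplanar prime-tower tree of `n`:
it is the number obtained by recursively canonizing the exponents, sorting them, and
assigning them to the first `ω(n)` primes in order.  Thus two positive integers have
the same nonplanar prime-tower tree `t#` if and only if their `canon` values agree. -/
noncomputable def canon (n : ℕ) : ℕ :=
  if n ≤ 1 then n
  else
    ((((((n.primeFactors.sort (· ≤ ·)).attach).map
        (fun p => canon (n.factorization p.1))).insertionSort (· ≤ ·)).zipIdx).map
      (fun ie => Nat.nth Nat.Prime ie.2 ^ ie.1)).prod
decreasing_by
  exact factorization_lt ((Finset.mem_sort _).mp p.2)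

namespace PrimeTower

def exponents (n : ℕ) : Multiset ℕ := n.primeFactors.val.map n.factorization

lemma factorization_prod_pow_apply {ι : Type*} [Fintype ι] {q : ι → ℕ} (hq : ∀ i, (q i).Prime)
    (f : ι → ℕ) (p : ℕ) :
    (∏ i, q i ^ f i).factorization p = ∑ i, Finsupp.single (q i) (f i) p := by
  rw [Nat.factorization_prod_apply fun i _ => pow_ne_zero _ (hq i).ne_zero]
  simp only [(hq _).factorization_pow]

lemma exponents_prod_pow {ι : Type*} [Fintype ι] {q : ι → ℕ} (hq : ∀ i, (q i).Prime)
    (hinj : Function.Injective q) {f : ι → ℕ} (hf : ∀ i, f i ≠ 0) :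
    exponents (∏ i, q i ^ f i) = Finset.univ.val.map f := by
  have hpf : (∏ i, q i ^ f i).primeFactors = Finset.univ.image q := by
    ext p
    rw [← Nat.support_factorization, Finsupp.mem_support_iff, factorization_prod_pow_apply hq]
    simp [Finsupp.single_apply, hf, Finset.sum_eq_zero_iff]
  rw [exponents, hpf, Finset.image_val_of_injOn hinj.injOn, Multiset.map_map]
  refine Multiset.map_congr rfl fun j _ => ?_
  classical
  simp [factorization_prod_pow_apply hq, Finsupp.single_apply, hinj.eq_iff]

lemma ne_zero_of_mem_exponents {n e : ℕ} (he : e ∈ exponents n) : e ≠ 0 := by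
  obtain ⟨p, hp, rfl⟩ := Multiset.mem_map.mp he
  exact Finsupp.mem_support_iff.mp hp

lemma lt_of_mem_exponents {n e : ℕ} (he : e ∈ exponents n) : e < n := by
  obtain ⟨p, hp, rfl⟩ := Multiset.mem_map.mp he
  exact Nat.factorization_lt _ (Nat.mem_primeFactors.mp hp).2.2

lemma prod_zipIdx_map_pow (q : ℕ → ℕ) (l : List ℕ) :
    (l.zipIdx.map fun ie => q ie.2 ^ ie.1).prod = ∏ i : Fin l.length, q i ^ l[i] := by
  rw [← List.prod_ofFn]
  congr 1
  exact (List.mapIdx_eq_zipIdx_map (f := fun i e => q i ^ e)).symm.trans (List.mapIdx_eq_ofFn _ _)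

lemma exists_mem_Ioc_factorization_two_eq (n T : ℕ) :
    ∃ N ∈ Finset.Ioc n (n + 2 ^ (T + 1)), N.factorization 2 = T := by
  have hdiv := Nat.div_add_mod (n + 2 ^ T) (2 ^ (T + 1))
  have hmod := Nat.mod_lt (n + 2 ^ T) (Nat.two_pow_pos (T + 1))
  generalize (n + 2 ^ T) / 2 ^ (T + 1) = q at hdiv
  generalize (n + 2 ^ T) % 2 ^ (T + 1) = r at hdiv hmod
  have hodd : ¬ 2 ∣ 2 * q + 1 := by omega
  rw [pow_succ] at hdiv hmod ⊢
  -- the element of the window congruent to `2 ^ T` modulo `2 ^ (T + 1)`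
  refine ⟨2 ^ T * (2 * q + 1), Finset.mem_Ioc.mpr ⟨by linarith, by linarith⟩, ?_⟩
  rw [Nat.factorization_mul (by positivity) (by omega), Finsupp.add_apply,
    Nat.factorization_eq_zero_of_not_dvd hodd, Nat.prime_two.factorization_pow]
  simp

lemma two_pow_mul_sq_le_four_mul_pow {j T : ℕ} (hj : 2 ≤ j) (hT : 2 ≤ T) :
    2 ^ T * j ^ 2 ≤ 4 * j ^ T := by
  obtain ⟨t, rfl⟩ := Nat.exists_eq_add_of_le' hT
  have := Nat.pow_le_pow_left hj t
  rw [pow_add, pow_add]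
  nlinarith [Nat.zero_le (j ^ 2)]

lemma card_le_of_forall_prime_pow_dvd {S : Finset ℕ} {X T : ℕ} (hT : 2 ≤ T)
    (hS : ∀ k ∈ S, k ∈ Finset.Ioc 0 X ∧ ∃ p, p.Prime ∧ p ^ T ∣ k) :
    (S.card : ℝ) ≤ 4 * X / 2 ^ T := by
  classical
  have hsub : S ⊆ (Finset.Ioo 1 (X + 1)).biUnion fun j => {k ∈ Finset.Ioc 0 X | j ^ T ∣ k} := by
    intro k hk
    obtain ⟨hkX, p, hp, hdvd⟩ := hS k hk
    have hpk : p ≤ k := (Nat.le_self_pow (by omega) p).trans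
      (Nat.le_of_dvd (Finset.mem_Ioc.mp hkX).1 hdvd)
    simp only [Finset.mem_biUnion, Finset.mem_Ioo, Finset.mem_filter]
    exact ⟨p, ⟨hp.one_lt, by linarith [(Finset.mem_Ioc.mp hkX).2]⟩, hkX, hdvd⟩
  have hterm : ∀ j ∈ Finset.Ioo 1 (X + 1),
      ((X / j ^ T : ℕ) : ℝ) ≤ 4 * X / 2 ^ T * ((j : ℝ) ^ 2)⁻¹ := by
    intro j hj
    have hj2 : 2 ≤ j := (Finset.mem_Ioo.mp hj).1
    have hkey : (2 : ℝ) ^ T * j ^ 2 ≤ 4 * j ^ T := by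
      exact_mod_cast two_pow_mul_sq_le_four_mul_pow hj2 hT
    calc ((X / j ^ T : ℕ) : ℝ) ≤ X / (j : ℝ) ^ T := by exact_mod_cast Nat.cast_div_le
      _ ≤ 4 * X / (2 ^ T * j ^ 2) := by
        rw [div_le_div_iff₀ (by positivity) (by positivity)]
        nlinarith [Nat.cast_nonneg (α := ℝ) X]
      _ = 4 * X / 2 ^ T * ((j : ℝ) ^ 2)⁻¹ := by ring
  calc (S.card : ℝ) ≤ ∑ j ∈ Finset.Ioo 1 (X + 1), ((X / j ^ T : ℕ) : ℝ) := by
        exact_mod_cast (Finset.card_le_card hsub).trans <| Finset.card_biUnion_le.trans_eq <|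
          Finset.sum_congr rfl fun j _ => Nat.Ioc_filter_dvd_card_eq_div X (j ^ T)
    _ ≤ ∑ j ∈ Finset.Ioo 1 (X + 1), 4 * X / 2 ^ T * ((j : ℝ) ^ 2)⁻¹ := Finset.sum_le_sum hterm
    _ = 4 * X / 2 ^ T * ∑ j ∈ Finset.Ioo 1 (X + 1), ((j : ℝ) ^ 2)⁻¹ := (Finset.mul_sum _ _ _).symm
    _ ≤ 4 * X / 2 ^ T * 1 := by
        gcongr
        simpa [one_add_one_eq_two] using sum_Ioo_inv_sq_le (α := ℝ) 1 (X + 1)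
    _ = 4 * X / 2 ^ T := mul_one _

lemma log_lt_two_mul_two_pow {g T : ℕ} (hg : g < 2 ^ (2 ^ T + 1)) (hg0 : 0 < g) :
    Real.log g < 2 * 2 ^ T := by
  have hg' : (g : ℝ) < 2 ^ (2 ^ T + 1) := by exact_mod_cast hg
  calc Real.log g < Real.log (2 ^ (2 ^ T + 1)) := Real.log_lt_log (by positivity) hg'
    _ = (2 ^ T + 1) * Real.log 2 := by rw [Real.log_pow]; push_cast; ring
    _ ≤ (2 ^ T + 1) * 1 := by gcongr; linarith [Real.log_two_lt_d9]
    _ ≤ 2 * 2 ^ T := by linarith [one_le_pow₀ (M₀ := ℝ) (n := T) one_le_two]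

-- The height `H(n)` of the rooted tree `t(n)`; a leaf (`n ≤ 1`) has height `0`.
noncomputable def height (n : ℕ) : ℕ :=
  n.primeFactors.attach.sup fun p => height (n.factorization p.1) + 1
decreasing_by exact Nat.factorization_lt _ (Nat.mem_primeFactors.mp p.2).2.2

lemma lt_height_iff {n k : ℕ} :
    k < height n ↔ ∃ p ∈ n.primeFactors, k ≤ height (n.factorization p) := by
  rw [height, Finset.sup_attach n.primeFactors fun p => height (n.factorization p) + 1]
  simp only [Finset.lt_sup_iff, Nat.lt_succ_iff]

lemma height_eq_sup_exponents (n : ℕ) :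
    height n = ((exponents n).map (height · + 1)).sup := by
  rw [height, Finset.sup_attach n.primeFactors fun p => height (n.factorization p) + 1,
    Finset.sup_def, exponents, Multiset.map_map]
  rfl

lemma exists_canon_eq_prod {n : ℕ} (hn : 2 ≤ n) : ∃ l : List ℕ,
    (l : Multiset ℕ) = (exponents n).map canon ∧
      canon n = ∏ i : Fin l.length, Nat.nth Nat.Prime i ^ l[i] := by
  rw [canon, if_neg (by omega)]
  refine ⟨_, ?_, prod_zipIdx_map_pow _ _⟩
  rw [Multiset.coe_eq_coe.mpr (List.perm_insertionSort _ _),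
    List.attach_map_val (f := fun p => canon (n.factorization p)), ← Multiset.map_coe,
    Finset.sort_eq, exponents, Multiset.map_map]
  rfl

lemma canon_ne_zero {n : ℕ} (hn : n ≠ 0) : canon n ≠ 0 := by
  rcases le_or_gt n 1 with h | h
  · rwa [canon, if_pos h]
  · obtain ⟨l, -, hl⟩ := exists_canon_eq_prod h
    rw [hl]
    exact Finset.prod_ne_zero_iff.mpr fun i _ => pow_ne_zero _ (Nat.prime_nth_prime _).ne_zero

lemma exponents_canon (n : ℕ) : exponents (canon n) = (exponents n).map canon := by
  rcases le_or_gt n 1 with h | h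
  · rw [canon, if_pos h]
    interval_cases n <;> simp [exponents]
  · obtain ⟨l, hl, hcanon⟩ := exists_canon_eq_prod h
    have hl_ne_zero (i : Fin l.length) : l[i] ≠ 0 := by
      obtain ⟨e, he, hce⟩ := Multiset.mem_map.mp (hl ▸ Multiset.mem_coe.mpr (List.getElem_mem i.2))
      exact hce ▸ canon_ne_zero (ne_zero_of_mem_exponents he)
    rw [hcanon, exponents_prod_pow (fun _ => Nat.prime_nth_prime _)
      ((Nat.nth_injective Nat.infinite_setOfPred_prime).comp Fin.val_injective) hl_ne_zero,
      Fin.univ_val_map]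
    simpa only [Fin.getElem_fin, List.ofFn_getElem] using hl

theorem height_canon (n : ℕ) : height (canon n) = height n := by
  induction n using Nat.strong_induction_on with
  | _ n ih =>
    rw [height_eq_sup_exponents, height_eq_sup_exponents n, exponents_canon, Multiset.map_map]
    exact congrArg _ (Multiset.map_congr rfl fun e he => by simp [ih e (lt_of_mem_exponents he)])

-- `tower k = 2 ↑↑ k`
def tower : ℕ → ℕ
  | 0 => 1
  | k + 1 => 2 ^ tower k

lemma tower_pos : ∀ k, 0 < tower k
  | 0 => Nat.one_pos
  | k + 1 => Nat.two_pow_pos (tower k)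

lemma two_le_tower {k : ℕ} (hk : k ≠ 0) : 2 ≤ tower k := by
  obtain ⟨k, rfl⟩ := Nat.exists_eq_succ_of_ne_zero hk
  exact Nat.le_self_pow (tower_pos k).ne' 2

lemma lt_tower (k : ℕ) : k < tower k := by
  induction k with
  | zero => exact Nat.one_pos
  | succ k ih => exact (Nat.succ_le_of_lt ih).trans_lt Nat.lt_two_pow_self

lemma le_height_tower (k : ℕ) : k ≤ height (tower k) := by
  induction k with
  | zero => exact Nat.zero_le _
  | succ k ih =>
    have h2 : 2 ∈ (tower (k + 1)).primeFactors := by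
      rw [tower, Nat.primeFactors_prime_pow (tower_pos k).ne' Nat.prime_two]
      exact Finset.mem_singleton_self 2
    have hfac : (tower (k + 1)).factorization 2 = tower k := by
      simp [tower, Nat.prime_two.factorization_self]
    exact lt_height_iff.mpr ⟨2, h2, hfac ▸ ih⟩

lemma exists_prime_pow_tower_dvd_of_lt_height {n k : ℕ} (h : k < height n) :
    ∃ p, p.Prime ∧ p ^ tower k ∣ n := by
  induction k generalizing n with
  | zero =>
    obtain ⟨p, hp, -⟩ := lt_height_iff.mp h
    exact ⟨p, Nat.prime_of_mem_primeFactors hp,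
      by simpa [tower] using Nat.dvd_of_mem_primeFactors hp⟩
  | succ k ih =>
    obtain ⟨p, hp, hk⟩ := lt_height_iff.mp h
    obtain ⟨q, hq, hdvd⟩ := ih hk
    have hv : 2 ^ tower k ≤ n.factorization p := (Nat.pow_le_pow_left hq.two_le _).trans
      (Nat.le_of_dvd (Nat.pos_of_ne_zero (Finsupp.mem_support_iff.mp hp)) hdvd)
    exact ⟨p, Nat.prime_of_mem_primeFactors hp, (pow_dvd_pow p hv).trans (Nat.ordProj_dvd n p)⟩

lemma lt_height_succ_of_canon_run {n g k : ℕ} (hg : 2 ^ (tower k + 1) ≤ g)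
    (hrun : ∀ i, 1 ≤ i → i ≤ g → canon (n + i) = canon (n + 1)) : k < height (n + 1) := by
  obtain ⟨N, hN, hfac⟩ := exists_mem_Ioc_factorization_two_eq n (tower k)
  rw [Finset.mem_Ioc] at hN
  have h2 : 2 ∈ N.primeFactors := Finsupp.mem_support_iff.mpr (hfac ▸ (tower_pos k).ne')
  have hcanon : canon N = canon (n + 1) := by
    simpa [Nat.add_sub_cancel' hN.1.le] using hrun (N - n) (by omega) (by omega)
  rw [← height_canon, ← hcanon, height_canon]
  exact lt_height_iff.mpr ⟨2, h2, hfac ▸ le_height_tower k⟩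

lemma exists_tower_window {g : ℕ} (hg : 8 ≤ g) :
    ∃ k, 2 ≤ tower k ∧ 2 ^ (tower k + 1) ≤ g ∧ g < 2 ^ (2 ^ tower k + 1) := by
  have hex : ∃ j, g < 2 * tower j := ⟨g, by linarith [lt_tower g]⟩
  have h3 : 3 ≤ Nat.find hex := Nat.le_find_iff hex 3 |>.mpr fun m hm => by
    interval_cases m <;> simp [tower] <;> omega
  obtain ⟨k, hk⟩ := Nat.exists_eq_add_of_le' h3
  have hlow := Nat.find_min hex (show k + 2 < Nat.find hex by omega)
  have hhigh := hk ▸ Nat.find_spec hex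
  refine ⟨k + 1, two_le_tower k.succ_ne_zero, ?_, ?_⟩ <;> rw [pow_succ]
  · simp only [tower] at hlow ⊢
    omega
  · simp only [tower] at hhigh ⊢
    omega

lemma card_le_of_canon_runs {A : Finset ℕ} {x g k : ℕ} (hk : 2 ≤ tower k)
    (hg : 2 ^ (tower k + 1) ≤ g)
    (hA : ∀ n ∈ A, n ∈ Finset.Icc 1 x ∧ ∀ i, 1 ≤ i → i ≤ g → canon (n + i) = canon (n + 1)) :
    (A.card : ℝ) ≤ 4 * (x + 1) / 2 ^ tower k := by
  rw [← Finset.card_image_of_injective _ (add_left_injective 1)]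
  refine le_of_le_of_eq (card_le_of_forall_prime_pow_dvd (X := x + 1) hk fun m hm => ?_)
    (by push_cast; rfl)
  obtain ⟨n, hn, rfl⟩ := Finset.mem_image.mp hm
  obtain ⟨hnx, hrun⟩ := hA n hn
  refine ⟨Finset.mem_Ioc.mpr ⟨n.succ_pos, by simpa using (Finset.mem_Icc.mp hnx).2⟩, ?_⟩
  exact exists_prime_pow_tower_dvd_of_lt_height (lt_height_succ_of_canon_run hg hrun)

theorem card_le_mul_div_log_of_canon_runs {A : Finset ℕ} {x g : ℕ} (hx : 1 ≤ x) (hg : 2 ≤ g)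
    (hA : ∀ n ∈ A, n ∈ Finset.Icc 1 x ∧ ∀ i, 1 ≤ i → i ≤ g → canon (n + i) = canon (n + 1)) :
    (A.card : ℝ) ≤ 16 * x / Real.log g := by
  have hlog : 0 < Real.log g := Real.log_pos (by exact_mod_cast hg)
  have hx' : (1 : ℝ) ≤ x := by exact_mod_cast hx
  rw [le_div_iff₀ hlog]
  rcases lt_or_ge g 8 with hg8 | hg8
  · have hcard : (A.card : ℝ) ≤ x := by
      exact_mod_cast (Finset.card_le_card fun n hn => (hA n hn).1).trans (by simp)
    have hlog16 : Real.log g < 16 := by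
      have : (g : ℝ) < 8 := by exact_mod_cast hg8
      linarith [Real.log_le_sub_one_of_pos (by positivity : (0 : ℝ) < g)]
    nlinarith
  · obtain ⟨k, hk, hlow, hhigh⟩ := exists_tower_window hg8
    calc (A.card : ℝ) * Real.log g ≤ 4 * (x + 1) / 2 ^ tower k * (2 * 2 ^ tower k) :=
          mul_le_mul (card_le_of_canon_runs hk hlow hA)
            (log_lt_two_mul_two_pow hhigh (by omega)).le hlog.le (by positivity)
      _ = 8 * (x + 1) := by field_simp; ring
      _ ≤ 16 * x := by linarith

end PrimeTower

open scoped Classical in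
/-- Uniformly in `x ≥ 2` and `g ≥ 2`, the number of `n ≤ x` with
`t#(n+1) = t#(n+2) = ⋯ = t#(n+g)` is `O(x / log g)`. -/
theorem stmt_14 : ∃ C : ℝ, ∀ x g : ℕ, 2 ≤ x → 2 ≤ g →
    (((Finset.Icc 1 x).filter
        (fun n => ∀ i, 1 ≤ i → i ≤ g → canon (n + i) = canon (n + 1))).card : ℝ) ≤
      C * x / Real.log g := by
  refine ⟨16, fun x g hx hg =>
    PrimeTower.card_le_mul_div_log_of_canon_runs (by omega) hg fun n hn => ?_⟩
  simpa only [Finset.mem_filter] using hn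
end
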